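/- arXiv:1607.01207 — 2 statements merged into one kernel-verified Lean document; each statement's English description precedes it below -/
import Mathlib

section
/- Let θ > 0, α > 0, β > 0. Then F is monotone increasing in each of its variables on (0, ∞): for 0 < x₁ ≤ x₂ and y > 0 one has F(x₁, y) ≤ F(x₂, y), and for 0 < y₁ ≤ y₂ and x > 0 one has F(x, y₁) ≤ F(x, y₂). -/
/-- For `θ, α, β > 0`, the skewed Clayton Lévy copula
`F(x,y) = ((α y^(−β) + 1) x^(−θ) + y^(−θ))^(−1/θ)` is monotone increasing in each
variable on `(0, ∞)`: for `0 < x₁ ≤ x₂` and `y > 0`, `F(x₁, y) ≤ F(x₂, y)`, and for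
`0 < y₁ ≤ y₂` and `x > 0`, `F(x, y₁) ≤ F(x, y₂)`. -/
theorem stmt_8 (θ α β : ℝ) (hθ : 0 < θ) (hα : 0 < α) (hβ : 0 < β) :
    (∀ x₁ x₂ y : ℝ, 0 < x₁ → x₁ ≤ x₂ → 0 < y →
      ((α * y ^ (-β) + 1) * x₁ ^ (-θ) + y ^ (-θ)) ^ (-1 / θ)
        ≤ ((α * y ^ (-β) + 1) * x₂ ^ (-θ) + y ^ (-θ)) ^ (-1 / θ)) ∧
    (∀ x y₁ y₂ : ℝ, 0 < y₁ → y₁ ≤ y₂ → 0 < x →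
      ((α * y₁ ^ (-β) + 1) * x ^ (-θ) + y₁ ^ (-θ)) ^ (-1 / θ)
        ≤ ((α * y₂ ^ (-β) + 1) * x ^ (-θ) + y₂ ^ (-θ)) ^ (-1 / θ)) := by
  have hpos : ∀ x y : ℝ, 0 < x → 0 < y →
      0 < (α * y ^ (-β) + 1) * x ^ (-θ) + y ^ (-θ) := by
    intro x y hx hy
    have h1 : 0 < x ^ (-θ) := Real.rpow_pos_of_pos hx _
    have h2 : 0 < y ^ (-θ) := Real.rpow_pos_of_pos hy _
    have h3 : 0 < α * y ^ (-β) + 1 := by positivity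
    positivity
  have hexp : (-1 / θ : ℝ) ≤ 0 := by
    apply div_nonpos_of_nonpos_of_nonneg <;> linarith
  constructor
  · intro x₁ x₂ y hx₁ hle hy
    have hx₂ : 0 < x₂ := lt_of_lt_of_le hx₁ hle
    apply Real.rpow_le_rpow_of_nonpos (hpos x₂ y hx₂ hy) _ hexp
    have : x₂ ^ (-θ) ≤ x₁ ^ (-θ) :=
      Real.rpow_le_rpow_of_nonpos hx₁ hle (by linarith)
    have h3 : 0 < α * y ^ (-β) + 1 := by positivity
    nlinarith
  · intro x y₁ y₂ hy₁ hle hx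
    have hy₂ : 0 < y₂ := lt_of_lt_of_le hy₁ hle
    apply Real.rpow_le_rpow_of_nonpos (hpos x y₂ hx hy₂) _ hexp
    have h1 : y₂ ^ (-θ) ≤ y₁ ^ (-θ) :=
      Real.rpow_le_rpow_of_nonpos hy₁ hle (by linarith)
    have h2 : y₂ ^ (-β) ≤ y₁ ^ (-β) :=
      Real.rpow_le_rpow_of_nonpos hy₁ hle (by linarith)
    have hx' : 0 < x ^ (-θ) := Real.rpow_pos_of_pos hx _
    nlinarith [mul_le_mul_of_nonneg_right (mul_le_mul_of_nonneg_left h2 hα.le) hx'.le]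
end

section
/- Let θ > 0, α > 0 and 0 < β ≤ θ + 1. Then F is 2-increasing: for all 0 < x₁ ≤ x₂ and 0 < y₁ ≤ y₂, the rectangle inequality F(x₂, y₂) − F(x₁, y₂) − F(x₂, y₁) + F(x₁, y₁) ≥ 0 holds. (This is the condition under which the skewed Clayton function is a valid positive Lévy copula.) -/
/-!
Writing `u = x ^ (-θ)`, the partial derivative `∂F/∂y` has the shape `(a u + b) (A u + B) ^ (-1/θ - 1)`
with coefficients depending only on `y`; the hypothesis `β ≤ θ + 1` is what makes this
antitone in `u`, hence monotone in `x`. So `y ↦ F(x₂, y) - F(x₁, y)` has nonnegative derivative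
for `x₁ ≤ x₂`, which is the rectangle inequality.
-/

open Set

theorem antitoneOn_affine_mul_rpow_affine {a b A B p : ℝ} (ha : 0 ≤ a) (hA : 0 ≤ A) (hB : 0 < B)
    (hp : p ≤ -1) (h : a * B + p * A * b ≤ 0) :
    AntitoneOn (fun u => (a * u + b) * (A * u + B) ^ p) (Ici 0) := by
  have hpos : ∀ u ∈ Ici (0 : ℝ), 0 < A * u + B := fun u hu => by
    have : 0 ≤ A * u := mul_nonneg hA hu
    linarith
  have hderiv : ∀ u ∈ Ici (0 : ℝ), HasDerivAt (fun u => (a * u + b) * (A * u + B) ^ p)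
      ((A * u + B) ^ (p - 1) * ((1 + p) * a * A * u + (a * B + p * A * b))) u := by
    intro u hu
    have hS := hpos u hu
    have hlin : HasDerivAt (fun u : ℝ => A * u + B) A u := by
      simpa using ((hasDerivAt_id u).const_mul A).add_const B
    have hlin' : HasDerivAt (fun u : ℝ => a * u + b) a u := by
      simpa using ((hasDerivAt_id u).const_mul a).add_const b
    refine (hlin'.mul (hlin.rpow_const (p := p) (Or.inl hS.ne'))).congr_deriv ?_
    rw [Real.rpow_sub_one hS.ne']
    field_simp
    ring
  refine antitoneOn_of_hasDerivWithinAt_nonpos (convex_Ici 0)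
    (fun u hu => (hderiv u hu).continuousAt.continuousWithinAt)
    (fun u hu => (hderiv u (interior_subset hu)).hasDerivWithinAt) fun u hu => ?_
  have hu : 0 ≤ u := interior_subset hu
  have hbracket : (1 + p) * a * A * u + (a * B + p * A * b) ≤ 0 := by
    have : 0 ≤ a * A * u := by positivity
    nlinarith
  exact mul_nonpos_of_nonneg_of_nonpos (Real.rpow_nonneg (hpos u hu).le _) hbracket

theorem monotoneOn_sub_of_hasDerivAt_le {f g f' g' : ℝ → ℝ} {c : ℝ}
    (hf : ∀ y ∈ Ioi c, HasDerivAt f (f' y) y) (hg : ∀ y ∈ Ioi c, HasDerivAt g (g' y) y)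
    (hle : ∀ y ∈ Ioi c, f' y ≤ g' y) :
    MonotoneOn (fun y => g y - f y) (Ioi c) := by
  have hderiv : ∀ y ∈ Ioi c, HasDerivAt (fun y => g y - f y) (g' y - f' y) y :=
    fun y hy => (hg y hy).sub (hf y hy)
  refine monotoneOn_of_hasDerivWithinAt_nonneg (convex_Ioi c)
    (fun y hy => (hderiv y hy).continuousAt.continuousWithinAt)
    (fun y hy => (hderiv y (interior_subset hy)).hasDerivWithinAt) fun y hy => ?_
  rw [interior_Ioi] at hy
  exact sub_nonneg.2 (hle y hy)

noncomputable def skewClayton (θ α β x y : ℝ) : ℝ :=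
  ((α * y ^ (-β) + 1) * x ^ (-θ) + y ^ (-θ)) ^ (-1 / θ)

noncomputable def skewClaytonDerivSnd (θ α β x y : ℝ) : ℝ :=
  (α * β / θ * y ^ (-β - 1) * x ^ (-θ) + y ^ (-θ - 1)) *
    ((α * y ^ (-β) + 1) * x ^ (-θ) + y ^ (-θ)) ^ (-1 / θ - 1)

theorem hasDerivAt_skewClayton_snd {θ α β x y : ℝ} (hθ : θ ≠ 0) (hα : 0 ≤ α) (hx : 0 < x)
    (hy : 0 < y) :
    HasDerivAt (skewClayton θ α β x) (skewClaytonDerivSnd θ α β x y) y := by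
  have hS : 0 < (α * y ^ (-β) + 1) * x ^ (-θ) + y ^ (-θ) := by positivity
  have hβ : HasDerivAt (fun y : ℝ => y ^ (-β)) (-β * y ^ (-β - 1)) y :=
    Real.hasDerivAt_rpow_const (Or.inl hy.ne')
  have hθ' : HasDerivAt (fun y : ℝ => y ^ (-θ)) (-θ * y ^ (-θ - 1)) y :=
    Real.hasDerivAt_rpow_const (Or.inl hy.ne')
  have hS' := ((((hβ.const_mul α).add_const 1).mul_const (x ^ (-θ))).add hθ').rpow_const
    (p := -1 / θ) (Or.inl hS.ne')
  simp only [Pi.add_apply] at hS'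
  refine hS'.congr_deriv ?_
  unfold skewClaytonDerivSnd
  field_simp
  ring

theorem monotoneOn_skewClaytonDerivSnd {θ α β y : ℝ} (hθ : 0 < θ) (hα : 0 ≤ α) (hβ : 0 ≤ β)
    (hβθ : β ≤ θ + 1) (hy : 0 < y) :
    MonotoneOn (fun x => skewClaytonDerivSnd θ α β x y) (Ioi 0) := by
  have hyθ := Real.rpow_pos_of_pos hy (-θ)
  have hyθ1 := Real.rpow_pos_of_pos hy (-θ - 1)
  have hpow : y ^ (-β - 1) * y ^ (-θ) = y ^ (-β) * y ^ (-θ - 1) := by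
    rw [← Real.rpow_add hy, ← Real.rpow_add hy]
    ring_nf
  have hexp : -1 / θ - 1 ≤ -1 := by
    linarith [div_neg_of_neg_of_pos (by norm_num : (-1 : ℝ) < 0) hθ]
  have hcoeff : α * β / θ * y ^ (-β - 1) * y ^ (-θ)
      + (-1 / θ - 1) * (α * y ^ (-β) + 1) * y ^ (-θ - 1) ≤ 0 := by
    rw [← mul_le_mul_iff_of_pos_right hθ, zero_mul]
    calc (α * β / θ * y ^ (-β - 1) * y ^ (-θ)
          + (-1 / θ - 1) * (α * y ^ (-β) + 1) * y ^ (-θ - 1)) * θ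
        = -(α * (θ + 1 - β) * (y ^ (-β) * y ^ (-θ - 1)) + (θ + 1) * y ^ (-θ - 1)) := by
          field_simp
          linear_combination (α * β) * hpow
      _ ≤ 0 := by
          have : 0 ≤ θ + 1 - β := by linarith
          have : 0 ≤ α * (θ + 1 - β) * (y ^ (-β) * y ^ (-θ - 1)) := by positivity
          nlinarith
  have hφ := antitoneOn_affine_mul_rpow_affine (a := α * β / θ * y ^ (-β - 1))
    (b := y ^ (-θ - 1)) (A := α * y ^ (-β) + 1) (B := y ^ (-θ)) (by positivity) (by positivity)
    hyθ hexp hcoeff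
  intro x₁ hx₁ x₂ hx₂ hle
  exact hφ (Real.rpow_nonneg hx₂.out.le _) (Real.rpow_nonneg hx₁.out.le _)
    (Real.rpow_le_rpow_of_nonpos hx₁ hle (by linarith))

/-- For `θ > 0`, `α > 0`, `0 < β ≤ θ + 1`, the skewed Clayton Lévy copula
`F(x,y) = ((α y^(−β) + 1) x^(−θ) + y^(−θ))^(−1/θ)` is 2-increasing: for all
`0 < x₁ ≤ x₂` and `0 < y₁ ≤ y₂`, `F(x₂,y₂) − F(x₁,y₂) − F(x₂,y₁) + F(x₁,y₁) ≥ 0`. -/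
theorem stmt_9 (θ α β : ℝ) (hθ : 0 < θ) (hα : 0 < α) (hβ : 0 < β) (hβθ : β ≤ θ + 1) :
    ∀ x₁ x₂ y₁ y₂ : ℝ, 0 < x₁ → x₁ ≤ x₂ → 0 < y₁ → y₁ ≤ y₂ →
      0 ≤ ((α * y₂ ^ (-β) + 1) * x₂ ^ (-θ) + y₂ ^ (-θ)) ^ (-1 / θ)
          - ((α * y₂ ^ (-β) + 1) * x₁ ^ (-θ) + y₂ ^ (-θ)) ^ (-1 / θ)
          - ((α * y₁ ^ (-β) + 1) * x₂ ^ (-θ) + y₁ ^ (-θ)) ^ (-1 / θ)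
          + ((α * y₁ ^ (-β) + 1) * x₁ ^ (-θ) + y₁ ^ (-θ)) ^ (-1 / θ) := by
  intro x₁ x₂ y₁ y₂ hx₁ hx hy₁ hy
  have hx₂ : 0 < x₂ := hx₁.trans_le hx
  have hmono := monotoneOn_sub_of_hasDerivAt_le
    (fun y hy => hasDerivAt_skewClayton_snd hθ.ne' hα.le hx₁ hy)
    (fun y hy => hasDerivAt_skewClayton_snd hθ.ne' hα.le hx₂ hy)
    (fun y hy => monotoneOn_skewClaytonDerivSnd hθ hα.le hβ.le hβθ hy hx₁ hx₂ hx)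
    hy₁ (hy₁.trans_le hy) hy
  simp only [skewClayton] at hmono
  linarith
end
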